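/- For block sizes (1,2,2,1) (so n = 6), the rational function B = (L_{(2,4)} L_{(4,6)}) / (M_{(1,2)} M_{(5,6)} M_{(2,5)}) with L_{(2,4)} = x_{1,2}x_{2,4} + x_{1,3}x_{3,4}, L_{(4,6)} = x_{3,4}x_{4,6} + x_{3,5}x_{5,6}, M_{(1,2)} = x_{1,2}, M_{(5,6)} = x_{5,6}, M_{(2,5)} = det[[x_{2,4},x_{2,5}],[x_{3,4},x_{3,5}]] is invariant under conjugation by all invertible upper-triangular 6×6 matrices g (acting on the nilradical matrix X by X ↦ gXg^{-1}). -/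

import Mathlib

/-!
Each factor of `B` is a relative invariant of the upper-triangular group. Under `X ↦ g X h`
with `g`, `h` upper triangular, the entries `M12 = X₀₁` and `M56 = X₄₅` and the minor `M25` of
rows `1, 2` and columns `3, 4` (0-based) are corners of the support of the nilradical: no other
support point lies weakly below and to the left of them. Hence they only pick up diagonal
entries of `g` and `h`. Likewise `L24 = (X²)₀₃` and `L46 = (X²)₂₅` are corner entries of `X²`,
and `(g X g⁻¹)² = g X² g⁻¹`.
The characters of numerator and denominator then agree since `g i i * g⁻¹ i i = 1`.
-/

open Matrix

/-- Block map for the block sizes `(1,2,2,1)` of `gl(6)`: blocks `{1}, {2,3}, {4,5}, {6}`. -/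
def blk6 (i : Fin 6) : ℕ :=
  if (i : ℕ) < 1 then 0 else if (i : ℕ) < 3 then 1 else if (i : ℕ) < 5 then 2 else 3

def L24 {K : Type*} [Field K] (X : Matrix (Fin 6) (Fin 6) K) : K :=
  X 0 1 * X 1 3 + X 0 2 * X 2 3

def L46 {K : Type*} [Field K] (X : Matrix (Fin 6) (Fin 6) K) : K :=
  X 2 3 * X 3 5 + X 2 4 * X 4 5

def M12 {K : Type*} [Field K] (X : Matrix (Fin 6) (Fin 6) K) : K := X 0 1

def M56 {K : Type*} [Field K] (X : Matrix (Fin 6) (Fin 6) K) : K := X 4 5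

def M25 {K : Type*} [Field K] (X : Matrix (Fin 6) (Fin 6) K) : K :=
  X 1 3 * X 2 4 - X 1 4 * X 2 3

namespace Matrix

variable {n R : Type*}

/-- `M` lies in the nilradical of the standard parabolic subalgebra whose diagonal blocks are the
fibres of `b`. -/
def StrictBlockTriangular {α : Type*} [LT α] [Zero R] (M : Matrix n n R) (b : n → α) : Prop :=
  ∀ i j, ¬ b i < b j → M i j = 0

theorem StrictBlockTriangular.lt_of_ne_zero {α : Type*} [LT α] [Zero R] {b : n → α}
    {X : Matrix n n R} (hX : X.StrictBlockTriangular b) {i j : n} (hij : X i j ≠ 0) : b i < b j :=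
  not_not.1 (mt (hX i j) hij)

section UpperTriangular

variable [Fintype n] [LinearOrder n] [Semiring R]

theorem IsUpperTriangular.mul_apply_self {A B : Matrix n n R} (hA : A.IsUpperTriangular)
    (hB : B.IsUpperTriangular) (i : n) : (A * B) i i = A i i * B i i := by
  rw [mul_apply]
  refine Finset.sum_eq_single i (fun k _ hki => ?_) (by simp)
  rcases lt_or_gt_of_ne hki with hlt | hgt
  · rw [hA hlt, zero_mul]
  · rw [hB hgt, mul_zero]

theorem IsUpperTriangular.mul_mul_apply_eq_sum {g Z h : Matrix n n R}
    (hg : g.IsUpperTriangular) (hh : h.IsUpperTriangular) {i j : n} (S T : Finset n)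
    (hZ : ∀ k l, i ≤ k → l ≤ j → Z k l ≠ 0 → k ∈ S ∧ l ∈ T) :
    (g * Z * h) i j = ∑ k ∈ S, ∑ l ∈ T, g i k * Z k l * h l j := by
  calc (g * Z * h) i j = ∑ k, ∑ l, g i k * Z k l * h l j := by
        simp only [mul_apply, Finset.sum_mul]
        exact Finset.sum_comm
    _ = ∑ k ∈ S, ∑ l ∈ T, g i k * Z k l * h l j := by
        rw [← Finset.sum_product', ← Finset.sum_product']
        refine (Finset.sum_subset (Finset.subset_univ _) fun ⟨k, l⟩ _ hkl => ?_).symm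
        by_contra hne
        have hik : i ≤ k := not_lt.1 fun hki => hne (by rw [hg hki]; simp)
        have hlj : l ≤ j := not_lt.1 fun hjl => hne (by rw [hh hjl]; simp)
        have hZkl : Z k l ≠ 0 := fun h0 => hne (by rw [h0]; simp)
        exact hkl (Finset.mem_product.2 (hZ k l hik hlj hZkl))

theorem IsUpperTriangular.mul_mul_apply_of_corner {g Z h : Matrix n n R}
    (hg : g.IsUpperTriangular) (hh : h.IsUpperTriangular) {i j : n}
    (hZ : ∀ k l, i ≤ k → l ≤ j → Z k l ≠ 0 → k = i ∧ l = j) :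
    (g * Z * h) i j = g i i * Z i j * h j j := by
  rw [IsUpperTriangular.mul_mul_apply_eq_sum hg hh {i} {j} (by simpa using hZ)]
  simp

end UpperTriangular

section Inverse

variable [Fintype n] [DecidableEq n] [CommRing R] {g : Matrix n n R}

theorem IsUpperTriangular.nonsing_inv [LinearOrder n] (hg : g.IsUpperTriangular) :
    g⁻¹.IsUpperTriangular := by
  by_cases hgdet : IsUnit g.det
  · have := g.invertibleOfIsUnitDet hgdet
    exact blockTriangular_inv_of_blockTriangular hg
  · rw [nonsing_inv_apply_not_isUnit g hgdet]
    exact blockTriangular_zero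

theorem conj_mul_conj {X Y : Matrix n n R} (hgdet : IsUnit g.det) :
    g * X * g⁻¹ * (g * Y * g⁻¹) = g * (X * Y) * g⁻¹ := by
  simp only [Matrix.mul_assoc, nonsing_inv_mul_cancel_left _ _ hgdet]

end Inverse

section StrictBlockTriangular

variable [Fintype n] [Semiring R] {X Y : Matrix n n R}

theorem StrictBlockTriangular.add_one_lt_of_mul_apply_ne_zero {b : n → ℕ}
    (hX : X.StrictBlockTriangular b) (hY : Y.StrictBlockTriangular b) {i j : n}
    (hij : (X * Y) i j ≠ 0) : b i + 1 < b j := by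
  obtain ⟨k, -, hk⟩ := Finset.exists_ne_zero_of_sum_ne_zero hij
  have := hX.lt_of_ne_zero (left_ne_zero_of_mul hk)
  have := hY.lt_of_ne_zero (right_ne_zero_of_mul hk)
  omega

theorem StrictBlockTriangular.upperTriangular_mul_mul [LinearOrder n] {α : Type*} [Preorder α]
    {b : n → α}
    (hX : X.StrictBlockTriangular b) (hb : Monotone b) {g h : Matrix n n R}
    (hg : g.IsUpperTriangular) (hh : h.IsUpperTriangular) :
    (g * X * h).StrictBlockTriangular b := by
  intro i j hij
  rw [IsUpperTriangular.mul_mul_apply_eq_sum hg hh ∅ ∅ fun k l hik hlj hkl =>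
    absurd ((hb hik).trans_lt ((hX.lt_of_ne_zero hkl).trans_le (hb hlj))) hij]
  simp

end StrictBlockTriangular

end Matrix

open Matrix

section BlockSizes1221

variable {K : Type*} [Field K] {X g h : Matrix (Fin 6) (Fin 6) K}

theorem monotone_blk6 : Monotone blk6 := by
  unfold Monotone
  decide

theorem L24_eq_mul_self_apply (hX : X.StrictBlockTriangular blk6) : L24 X = (X * X) 0 3 := by
  rw [mul_apply, Fin.sum_univ_six, hX 0 0 (by decide), hX 3 3 (by decide), hX 4 3 (by decide),
    hX 5 3 (by decide), L24]
  simp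

theorem L46_eq_mul_self_apply (hX : X.StrictBlockTriangular blk6) : L46 X = (X * X) 2 5 := by
  rw [mul_apply, Fin.sum_univ_six, hX 2 0 (by decide), hX 2 1 (by decide), hX 2 2 (by decide),
    hX 5 5 (by decide), L46]
  simp

theorem M12_mul_mul (hg : g.IsUpperTriangular) (hh : h.IsUpperTriangular)
    (hX : X.StrictBlockTriangular blk6) : M12 (g * X * h) = g 0 0 * h 1 1 * M12 X := by
  have key : ∀ k l : Fin 6, 0 ≤ k → l ≤ 1 → blk6 k < blk6 l → k = 0 ∧ l = 1 := by decide
  rw [M12, M12, IsUpperTriangular.mul_mul_apply_of_corner hg hh fun k l hk hl hkl =>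
    key k l hk hl (hX.lt_of_ne_zero hkl)]
  ring

theorem M56_mul_mul (hg : g.IsUpperTriangular) (hh : h.IsUpperTriangular)
    (hX : X.StrictBlockTriangular blk6) : M56 (g * X * h) = g 4 4 * h 5 5 * M56 X := by
  have key : ∀ k l : Fin 6, 4 ≤ k → l ≤ 5 → blk6 k < blk6 l → k = 4 ∧ l = 5 := by decide
  rw [M56, M56, IsUpperTriangular.mul_mul_apply_of_corner hg hh fun k l hk hl hkl =>
    key k l hk hl (hX.lt_of_ne_zero hkl)]
  ring

theorem M25_mul_mul (hg : g.IsUpperTriangular) (hh : h.IsUpperTriangular)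
    (hX : X.StrictBlockTriangular blk6) :
    M25 (g * X * h) = g 1 1 * g 2 2 * (h 3 3 * h 4 4) * M25 X := by
  have key : ∀ k l : Fin 6, 1 ≤ k → l ≤ 4 → blk6 k < blk6 l → k ∈ ({1, 2} : Finset _) ∧
      l ∈ ({3, 4} : Finset _) := by decide
  have entry : ∀ i j : Fin 6, 1 ≤ i → j ≤ 4 → (g * X * h) i j =
      ∑ k ∈ {1, 2}, ∑ l ∈ {3, 4}, g i k * X k l * h l j := fun i j hi hj =>
    IsUpperTriangular.mul_mul_apply_eq_sum hg hh _ _ fun k l hk hl hkl =>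
      key k l (hi.trans hk) (hl.trans hj) (hX.lt_of_ne_zero hkl)
  rw [M25, M25, entry 1 3 le_rfl (by decide), entry 1 4 le_rfl le_rfl,
    entry 2 3 (by decide) (by decide), entry 2 4 (by decide) le_rfl]
  simp only [Finset.sum_pair (by decide : (1 : Fin 6) ≠ 2),
    Finset.sum_pair (by decide : (3 : Fin 6) ≠ 4), hg (by decide : (1 : Fin 6) < 2),
    hh (by decide : (3 : Fin 6) < 4)]
  ring

theorem L24_conj (hg : g.IsUpperTriangular) (hgdet : IsUnit g.det)
    (hX : X.StrictBlockTriangular blk6) : L24 (g * X * g⁻¹) = g 0 0 * g⁻¹ 3 3 * L24 X := by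
  have hinv := hg.nonsing_inv
  have key : ∀ k l : Fin 6, 0 ≤ k → l ≤ 3 → blk6 k + 1 < blk6 l → k = 0 ∧ l = 3 := by decide
  rw [L24_eq_mul_self_apply (hX.upperTriangular_mul_mul monotone_blk6 hg hinv),
    conj_mul_conj hgdet, IsUpperTriangular.mul_mul_apply_of_corner hg hinv
      fun k l hk hl hkl => key k l hk hl (hX.add_one_lt_of_mul_apply_ne_zero hX hkl),
    L24_eq_mul_self_apply hX]
  ring

theorem L46_conj (hg : g.IsUpperTriangular) (hgdet : IsUnit g.det)
    (hX : X.StrictBlockTriangular blk6) : L46 (g * X * g⁻¹) = g 2 2 * g⁻¹ 5 5 * L46 X := by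
  have hinv := hg.nonsing_inv
  have key : ∀ k l : Fin 6, 2 ≤ k → l ≤ 5 → blk6 k + 1 < blk6 l → k = 2 ∧ l = 5 := by decide
  rw [L46_eq_mul_self_apply (hX.upperTriangular_mul_mul monotone_blk6 hg hinv),
    conj_mul_conj hgdet, IsUpperTriangular.mul_mul_apply_of_corner hg hinv
      fun k l hk hl hkl => key k l hk hl (hX.add_one_lt_of_mul_apply_ne_zero hX hkl),
    L46_eq_mul_self_apply hX]
  ring

end BlockSizes1221

theorem B_46_B_invariant_general {K : Type*} [Field K]
    (X g : Matrix (Fin 6) (Fin 6) K)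
    (hX : ∀ a b : Fin 6, ¬ blk6 a < blk6 b → X a b = 0)
    (hg : ∀ a b : Fin 6, b < a → g a b = 0) (hgdet : IsUnit g.det) :
    L24 (g * X * g⁻¹) * L46 (g * X * g⁻¹) /
      (M12 (g * X * g⁻¹) * M56 (g * X * g⁻¹) * M25 (g * X * g⁻¹))
      = L24 X * L46 X / (M12 X * M56 X * M25 X) := by
  have hinv : g⁻¹.IsUpperTriangular := IsUpperTriangular.nonsing_inv hg
  have hdiag (i : Fin 6) : g i i * g⁻¹ i i = 1 := by
    rw [← IsUpperTriangular.mul_apply_self hg hinv, mul_nonsing_inv g hgdet, one_apply_eq]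
  rw [L24_conj hg hgdet hX, L46_conj hg hgdet hX, M12_mul_mul hg hinv hX, M56_mul_mul hg hinv hX,
    M25_mul_mul hg hinv hX]
  set c := g 0 0 * g⁻¹ 3 3 * (g 2 2 * g⁻¹ 5 5)
  have hc : c ≠ 0 := mul_ne_zero
    (mul_ne_zero (left_ne_zero_of_mul_eq_one (hdiag 0)) (right_ne_zero_of_mul_eq_one (hdiag 3)))
    (mul_ne_zero (left_ne_zero_of_mul_eq_one (hdiag 2)) (right_ne_zero_of_mul_eq_one (hdiag 5)))
  calc _ = c * (L24 X * L46 X) / (c * (M12 X * M56 X * M25 X)) := by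
        congr 1
        · ring
        · linear_combination c * (M12 X * M56 X * M25 X) * (g 4 4 * g⁻¹ 4 4 * hdiag 1 + hdiag 4)
    _ = _ := mul_div_mul_left _ _ hc

/-- For block sizes `(1,2,2,1)`, the rational function
`B = (L_{(2,4)} L_{(4,6)}) / (M_{(1,2)} M_{(5,6)} M_{(2,5)})` is invariant under
conjugation of the nilradical matrix `X` by any invertible upper-triangular matrix. -/
theorem B_46_B_invariant {K : Type*} [Field K] [CharZero K]
    (X g : Matrix (Fin 6) (Fin 6) K)
    (hX : ∀ a b : Fin 6, ¬ blk6 a < blk6 b → X a b = 0)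
    (hg : ∀ a b : Fin 6, b < a → g a b = 0) (hgdet : IsUnit g.det)
    (hden : M12 X * M56 X * M25 X ≠ 0) :
    L24 (g * X * g⁻¹) * L46 (g * X * g⁻¹) /
      (M12 (g * X * g⁻¹) * M56 (g * X * g⁻¹) * M25 (g * X * g⁻¹))
      = L24 X * L46 X / (M12 X * M56 X * M25 X) :=
  B_46_B_invariant_general X g hX hg hgdet
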